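/- arXiv:1504.08243 — 2 statements merged into one kernel-verified Lean document; each statement's English description precedes it below -/
import Mathlib

section
/- For the ellipse x² + y²/b² = 1 with 0 < b < 1, the integral of the 2/3 power of the curvature with respect to arc length equals C = 4 b^{2/3} K(1 − b²), where K is the complete elliptic integral of the first kind. -/
/-! After pulling `b^{2/3}` out of `κ^{2/3}`, the integrand is `(1 - (1 - b²) cos² φ)^{-1/2}`.
Shifting by `π / 2` trades `cos` for `sin` over a full period, and `sin² φ` has period `π` and
is symmetric about `π / 2`, so the integral over `[0, 2π]` is four copies of `K(1 - b²)`. -/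

open Real

/-- The complete elliptic integral of the first kind. -/
noncomputable def ellipticK (m : ℝ) : ℝ :=
  ∫ θ in (0 : ℝ)..(π / 2), (1 - m * Real.sin θ ^ 2) ^ (-(1 : ℝ) / 2)

theorem integral_comp_cos_eq_integral_comp_sin {E : Type*} [NormedAddCommGroup E]
    [NormedSpace ℝ E] (f : ℝ → E) :
    ∫ x in (0 : ℝ)..(2 * π), f (cos x) = ∫ x in (0 : ℝ)..(2 * π), f (sin x) := by
  have hper : Function.Periodic (fun x => f (sin x)) (2 * π) := fun x => by
    simp only [sin_add_two_pi]
  simp_rw [← sin_add_pi_div_two]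
  rw [intervalIntegral.integral_comp_add_right (fun x => f (sin x)), zero_add,
    add_comm (2 * π), hper.intervalIntegral_add_eq (π / 2) 0, zero_add]

theorem integral_comp_sin_sq_zero_two_pi {f : ℝ → ℝ} (hf : ContinuousOn f (Set.Icc 0 1)) :
    ∫ x in (0 : ℝ)..(2 * π), f (sin x ^ 2)
      = 4 * ∫ x in (0 : ℝ)..(π / 2), f (sin x ^ 2) := by
  set g : ℝ → ℝ := fun x => f (sin x ^ 2)
  have hg : Continuous g := hf.comp_continuous (by fun_prop) fun x =>
    ⟨sq_nonneg _, sin_sq_le_one x⟩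
  have hg_int : ∀ a c : ℝ, IntervalIntegrable g MeasureTheory.volume a c :=
    fun _ _ => hg.intervalIntegrable _ _
  have hper : Function.Periodic g π := fun x => by simp only [g, sin_add_pi, neg_sq]
  have two_periods : ∫ x in (0 : ℝ)..2 * π, g x = 2 * ∫ x in (0 : ℝ)..π, g x := by
    rw [two_mul, hper.intervalIntegral_add_eq_add 0 π hg_int, zero_add, ← two_mul]
  have reflect : ∫ x in (π / 2)..π, g x = ∫ x in (0 : ℝ)..(π / 2), g x := by
    have := intervalIntegral.integral_comp_sub_left g π (a := 0) (b := π / 2)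
    simpa only [g, sin_pi_sub, sub_zero, sub_half] using this.symm
  rw [two_periods, ← intervalIntegral.integral_add_adjacent_intervals (hg_int 0 (π / 2))
    (hg_int (π / 2) π), reflect]
  ring

theorem continuousOn_one_sub_mul_rpow_neg_half {m : ℝ} (hm : m < 1) :
    ContinuousOn (fun s : ℝ => (1 - m * s) ^ (-(1 : ℝ) / 2)) (Set.Icc 0 1) := by
  refine ContinuousOn.rpow_const (by fun_prop) fun s ⟨hs0, hs1⟩ => Or.inl ?_
  nlinarith [mul_nonneg hs0 (sub_pos.2 hm).le, mul_nonneg (sub_nonneg.2 hs1) (sub_pos.2 hm).le]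

theorem div_rpow_three_halves_rpow_two_thirds_mul_sqrt {b A : ℝ} (hb : 0 ≤ b) (hA : 0 < A) :
    (b / A ^ ((3 : ℝ) / 2)) ^ ((2 : ℝ) / 3) * A ^ ((1 : ℝ) / 2)
      = b ^ ((2 : ℝ) / 3) * A ^ (-(1 : ℝ) / 2) := by
  rw [div_rpow hb (rpow_nonneg hA.le _), ← rpow_mul hA.le, div_mul_eq_mul_div,
    mul_div_assoc, ← rpow_sub hA]
  norm_num

theorem ellipse_curvature_integral_general (b : ℝ) (hb0 : 0 < b) :
    (∫ φ in (0 : ℝ)..(2 * π),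
        (b / (Real.sin φ ^ 2 + b ^ 2 * Real.cos φ ^ 2) ^ ((3 : ℝ) / 2)) ^ ((2 : ℝ) / 3) *
          (Real.sin φ ^ 2 + b ^ 2 * Real.cos φ ^ 2) ^ ((1 : ℝ) / 2))
      = 4 * b ^ ((2 : ℝ) / 3) * ellipticK (1 - b ^ 2) := by
  set k : ℝ → ℝ := fun s => (1 - (1 - b ^ 2) * s) ^ (-(1 : ℝ) / 2)
  have hk : ContinuousOn k (Set.Icc 0 1) :=
    continuousOn_one_sub_mul_rpow_neg_half (by nlinarith)
  have hA (φ : ℝ) : sin φ ^ 2 + b ^ 2 * cos φ ^ 2 = 1 - (1 - b ^ 2) * cos φ ^ 2 := by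
    linear_combination sin_sq_add_cos_sq φ
  calc _ = ∫ φ in (0 : ℝ)..(2 * π), b ^ ((2 : ℝ) / 3) * k (cos φ ^ 2) := by
        refine intervalIntegral.integral_congr fun φ _ => ?_
        have hpos : 0 < sin φ ^ 2 + b ^ 2 * cos φ ^ 2 := by
          nlinarith [sin_sq_add_cos_sq φ, sq_nonneg (sin φ),
            mul_nonneg (sq_nonneg b) (sq_nonneg (cos φ))]
        rw [div_rpow_three_halves_rpow_two_thirds_mul_sqrt hb0.le hpos, hA]
    _ = b ^ ((2 : ℝ) / 3) * (4 * ∫ x in (0 : ℝ)..(π / 2), k (sin x ^ 2)) := by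
        rw [intervalIntegral.integral_const_mul,
          integral_comp_cos_eq_integral_comp_sin (fun c => k (c ^ 2)),
          integral_comp_sin_sq_zero_two_pi hk]
    _ = 4 * b ^ ((2 : ℝ) / 3) * ellipticK (1 - b ^ 2) := by
        rw [ellipticK]; ring

/-- For the ellipse `x² + y²/b² = 1` with `0 < b < 1`, the integral of `κ^{2/3}` with
respect to arc length equals `C = 4 b^{2/3} K(1 − b²)`. -/
theorem ellipse_curvature_integral (b : ℝ) (hb0 : 0 < b) (hb1 : b < 1) :
    (∫ φ in (0 : ℝ)..(2 * π),
        (b / (Real.sin φ ^ 2 + b ^ 2 * Real.cos φ ^ 2) ^ ((3 : ℝ) / 2)) ^ ((2 : ℝ) / 3) *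
          (Real.sin φ ^ 2 + b ^ 2 * Real.cos φ ^ 2) ^ ((1 : ℝ) / 2))
      = 4 * b ^ ((2 : ℝ) / 3) * ellipticK (1 - b ^ 2) :=
  ellipse_curvature_integral_general b hb0
end

section
/- Fix n ≥ 3 and let z ∈ ℂ with z^{n−2} = −1. Then for all sufficiently small ε > 0, the polynomial r(y) = 1 − y² − ε yⁿ has a root of the form y = ε^{−1/(n−2)}(z + O(ε^{2/(n−2)})), depending analytically on ε^{2/(n−2)}. -/
open Real Set

/-- For `n ≥ 3` and `z^{n−2} = −1`, for all small `ε > 0` the polynomial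
`r(y) = 1 − y² − ε yⁿ` has a root `y = ε^{−1/(n−2)}(z + O(ε^{2/(n−2)}))`,
depending analytically on `ε^{2/(n−2)}`. -/
theorem root_of_r_scaling (n : ℕ) (hn : 3 ≤ n) (z : ℂ) (hz : z ^ (n - 2) = -1) :
    ∃ μ₀ > (0 : ℝ), ∃ C > (0 : ℝ), ∃ w : ℝ → ℂ,
      AnalyticOn ℝ w (Ioo (-μ₀) μ₀) ∧ w 0 = z ∧
      ∀ ε : ℝ, 0 < ε → ε ^ ((2 : ℝ) / ((n : ℝ) - 2)) < μ₀ →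
        ‖w (ε ^ ((2 : ℝ) / ((n : ℝ) - 2))) - z‖ ≤ C * ε ^ ((2 : ℝ) / ((n : ℝ) - 2)) ∧
        ∀ y : ℂ, y = ((ε ^ (-(1 : ℝ) / ((n : ℝ) - 2)) : ℝ) : ℂ) *
            w (ε ^ ((2 : ℝ) / ((n : ℝ) - 2))) →
          1 - y ^ 2 - (ε : ℂ) * y ^ n = 0 := by
  -- basic facts
  have hz0 : z ≠ 0 := by
    intro h
    rw [h, zero_pow (by omega : n - 2 ≠ 0)] at hz
    exact absurd hz (by norm_num)
  set f : ℂ → ℂ := fun w => w ^ 2 + w ^ n with hf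
  have hzn : z ^ n = -(z ^ 2) := by
    have : z ^ n = z ^ 2 * z ^ (n - 2) := by rw [← pow_add]; congr 1; omega
    rw [this, hz]; ring
  have hfz : f z = 0 := by simp [hf, hzn]
  have hd : HasStrictDerivAt f ((2 - (n : ℂ)) * z) z := by
    have h1 := hasStrictDerivAt_pow 2 z
    have h2 := hasStrictDerivAt_pow n z
    have h3 := h1.add h2
    refine h3.congr_deriv ?_
    have hzn1 : z ^ (n - 1) = -z := by
      rw [show n - 1 = (n - 2) + 1 by omega, pow_succ, hz]; ring
    simp [hzn1]; ring
  have hd0 : ((2 : ℂ) - n) * z ≠ 0 := by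
    refine mul_ne_zero (sub_ne_zero.2 ?_) hz0
    intro h
    have : (n : ℂ) = 2 := h.symm
    have : n = 2 := by exact_mod_cast this
    omega
  have hF := hd.hasStrictFDerivAt_equiv hd0
  set Φ := hF.toOpenPartialHomeomorph f with hΦ
  have hsrc : z ∈ Φ.source := hF.mem_toOpenPartialHomeomorph_source
  have hfan : ∀ x : ℂ, AnalyticAt ℂ f x := fun x =>
    ((analyticAt_id).pow 2).add ((analyticAt_id).pow n)
  set G : ℂ → ℂ := ⇑Φ.symm with hG
  have hGan0 : AnalyticAt ℂ G 0 := by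
    rw [← hfz]
    exact Φ.analyticAt_symm' hsrc (hfan z) hF.hasFDerivAt.fderiv
  have hGz : G 0 = z := by rw [← hfz]; exact Φ.left_inv hsrc
  -- eventual facts near 0
  have hev : ∀ᶠ ζ in nhds (0 : ℂ), AnalyticAt ℂ G ζ ∧ f (G ζ) = ζ := by
    refine hGan0.eventually_analyticAt.and ?_
    have h2 := Φ.eventually_right_inverse' hsrc
    have hcoe : (Φ : ℂ → ℂ) = f := rfl
    rw [hcoe, hfz] at h2
    exact h2
  obtain ⟨ρ, hρ, hball⟩ := Metric.eventually_nhds_iff.1 hev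
  -- the real function
  set w : ℝ → ℂ := fun t => G ((t : ℝ) : ℂ) with hw
  have hwan : ∀ t : ℝ, |t| < ρ → AnalyticAt ℝ w t := by
    intro t ht
    have h1 : AnalyticAt ℂ G ((t : ℝ) : ℂ) := by
      refine (hball ?_).1
      simpa [Complex.dist_eq, Complex.norm_real] using ht
    exact h1.restrictScalars.comp (Complex.ofRealCLM.analyticAt t)
  -- Lipschitz bound near 0
  have hcd : ContDiffAt ℝ 1 w 0 := by
    have := hwan 0 (by simpa using hρ)
    exact this.contDiffAt.of_le le_top
  obtain ⟨K, t, ht, hlip⟩ := hcd.exists_lipschitzOnWith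
  obtain ⟨δ, hδ, hδt⟩ := Metric.mem_nhds_iff.1 ht
  set μ₀ : ℝ := min δ ρ with hμ₀
  have hμ₀pos : 0 < μ₀ := lt_min hδ hρ
  set C : ℝ := max (K : ℝ) 1 with hC
  refine ⟨μ₀, hμ₀pos, C, lt_of_lt_of_le one_pos (le_max_right _ _), w, ?_, by
      simpa [hw] using hGz, ?_⟩
  · intro s hs
    have : |s| < ρ := lt_of_lt_of_le (abs_lt.2 ⟨by linarith [hs.1], hs.2⟩) (min_le_right δ ρ)
    exact (hwan s this).analyticWithinAt
  · intro ε hε hεμ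
    set a : ℝ := (n : ℝ) - 2 with ha
    have hapos : 0 < a := by
      have : (3 : ℝ) ≤ (n : ℝ) := by exact_mod_cast hn
      simp [ha]; linarith
    set μ : ℝ := ε ^ ((2 : ℝ) / a) with hμ
    have hμpos : 0 < μ := rpow_pos_of_pos hε _
    have hμρ : μ < ρ := lt_of_lt_of_le hεμ (min_le_right δ ρ)
    have hμδ : μ < δ := lt_of_lt_of_le hεμ (min_le_left δ ρ)
    -- membership for lipschitz
    have h0t : (0 : ℝ) ∈ t := hδt (by simp [hδ])
    have hμt : μ ∈ t := hδt (by simp [abs_of_pos hμpos, hμδ])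
    constructor
    · have := hlip.dist_le_mul μ hμt 0 h0t
      have hw0 : w 0 = z := by simpa [hw] using hGz
      calc ‖w μ - z‖ = dist (w μ) (w 0) := by rw [hw0, dist_eq_norm]
        _ ≤ K * dist μ 0 := this
        _ = K * μ := by rw [Real.dist_eq, sub_zero, abs_of_pos hμpos]
        _ ≤ C * μ := by
            apply mul_le_mul_of_nonneg_right (le_max_left _ _) hμpos.le
    · intro y hy
      -- f (w μ) = μ
      have hroot : (w μ) ^ 2 + (w μ) ^ n = (μ : ℂ) := by
        have hmem : dist ((μ : ℝ) : ℂ) 0 < ρ := by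
          simpa [Complex.dist_eq, Complex.norm_real, abs_of_pos hμpos] using hμρ
        have := (hball hmem).2
        simpa [hf, hw] using this
      -- rpow algebra
      set c : ℝ := ε ^ (-(1 : ℝ) / a) with hc
      have hcsq : (c : ℝ) ^ 2 = μ⁻¹ := by
        rw [hc, ← Real.rpow_natCast (ε ^ (-(1:ℝ)/a)) 2, ← Real.rpow_mul hε.le,
          hμ, ← Real.rpow_neg hε.le]
        congr 1
        push_cast
        ring
      have hcn : ε * (c : ℝ) ^ n = μ⁻¹ := by
        rw [hc, ← Real.rpow_natCast (ε ^ (-(1:ℝ)/a)) n, ← Real.rpow_mul hε.le,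
          hμ, ← Real.rpow_neg hε.le]
        nth_rewrite 1 [← Real.rpow_one ε]
        rw [← Real.rpow_add hε]
        congr 1
        have hane : a ≠ 0 := hapos.ne'
        field_simp
        ring
      have hμne : ((μ : ℝ) : ℂ) ≠ 0 := by exact_mod_cast hμpos.ne'
      rw [hy]
      have e1 : (((c : ℝ) : ℂ)) ^ 2 = (((μ⁻¹ : ℝ)) : ℂ) := by exact_mod_cast congrArg Complex.ofReal hcsq
      have e2 : (ε : ℂ) * (((c : ℝ) : ℂ)) ^ n = (((μ⁻¹ : ℝ)) : ℂ) := by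
        exact_mod_cast congrArg Complex.ofReal hcn
      have expand : (1 : ℂ) - (((c : ℝ) : ℂ) * w μ) ^ 2 - (ε : ℂ) * (((c : ℝ) : ℂ) * w μ) ^ n
          = 1 - (((μ⁻¹ : ℝ)) : ℂ) * ((w μ) ^ 2 + (w μ) ^ n) := by
        rw [mul_pow, mul_pow, e1, ← mul_assoc, e2]; ring
      rw [expand, hroot]
      rw [Complex.ofReal_inv]
      field_simp
      ring
end
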